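/- With the second-order normal form setup, the second-order combination-mode participation factor p_{2,kpq} = ∑_{i=1}^n φ_{ki} h^i_{pq} ψ_{pk} ψ_{qk} satisfies: under scalings φ_i = σ_i φ̂_i, ψ_i = ξ_i ψ̂_i with θ_i = ξ_i σ_i (ψ̂_i φ̂_i fixed and nonzero), p_{2,kpq} = ∑_i (θ_i/(ψ̂_iφ̂_i)) φ̂_{ki} ĥ^i_{pq} · (θ_p/(ψ̂_pφ̂_p)) ψ̂_{pk} · (θ_q/(ψ̂_qφ̂_q)) ψ̂_{qk}. Hence p_{2,kpq} depends only on the products θ_1,…,θ_n and not on the individual factors σ_i, ξ_i. -/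
import Mathlib


open Matrix

/-- the 2nd-order normal form coefficient computed from given eigenvectors -/
noncomputable def h2 (n : ℕ) (lam : Fin n → ℂ) (a : Fin n → Fin n → Fin n → ℂ)
    (ψ φ : Fin n → Fin n → ℂ) (i p q : Fin n) : ℂ :=
  (∑ j : Fin n, ∑ α : Fin n, ∑ β : Fin n, ψ i j * a j α β * φ p α * φ q β) /
    (lam p + lam q - lam i)

lemma h2_scaled (n : ℕ) (lam : Fin n → ℂ) (a : Fin n → Fin n → Fin n → ℂ)
    (φhat ψhat : Fin n → Fin n → ℂ) (σ ξ : Fin n → ℂ) (i p q : Fin n) :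
    h2 n lam a (fun j => ξ j • ψhat j) (fun j => σ j • φhat j) i p q
      = ξ i * σ p * σ q * h2 n lam a ψhat φhat i p q := by
  unfold h2
  rw [← mul_div_assoc]
  congr 1
  simp only [Pi.smul_apply, smul_eq_mul, Finset.mul_sum]
  refine Finset.sum_congr rfl fun j _ => Finset.sum_congr rfl fun α _ =>
    Finset.sum_congr rfl fun β _ => by ring

/-- the 2nd-order combination-mode participation factor
p_{2,kpq} = ∑ᵢ φ_{ki} h^i_{pq} ψ_{pk} ψ_{qk} depends only on the θ-factors. -/
theorem combination_mode_pf_theta (n : ℕ) (lam : Fin n → ℂ)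
    (a : Fin n → Fin n → Fin n → ℂ)
    (hnr : ∀ p q i : Fin n, lam p + lam q ≠ lam i)
    (φhat ψhat : Fin n → Fin n → ℂ)
    (hd : ∀ i, dotProduct (ψhat i) (φhat i) ≠ 0)
    (σ ξ θ : Fin n → ℂ) (hσ : ∀ i, σ i ≠ 0) (hξ : ∀ i, ξ i ≠ 0)
    (hθ : ∀ i, θ i = ξ i * σ i * dotProduct (ψhat i) (φhat i))
    (k p q : Fin n) :
    ∑ i : Fin n, (σ i * φhat i k) *
        h2 n lam a (fun j => ξ j • ψhat j) (fun j => σ j • φhat j) i p q *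
        (ξ p * ψhat p k) * (ξ q * ψhat q k)
    = ∑ i : Fin n, (θ i / dotProduct (ψhat i) (φhat i)) * φhat i k *
        h2 n lam a ψhat φhat i p q *
        ((θ p / dotProduct (ψhat p) (φhat p)) * ψhat p k) *
        ((θ q / dotProduct (ψhat q) (φhat q)) * ψhat q k) := by
  have hθ' : ∀ i, θ i / dotProduct (ψhat i) (φhat i) = ξ i * σ i := fun i => by
    rw [hθ i, mul_div_assoc, div_self (hd i), mul_one]
  refine Finset.sum_congr rfl fun i _ => ?_
  rw [h2_scaled, hθ' i, hθ' p, hθ' q]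
  ring
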